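/- Let δ = δ' + δ'' with δ, δ', δ'' ≥ 0. Let a ≤ b in R, X the segment from a to b, Q : [0,1] → R a curve with Q(0) = a, Q(1) = b and d_F(Q, X) ≤ δ', and P : [0,1] → R a curve with d_F(P, X) ≤ δ. If |Q(0) − P(0)| ≤ δ'' and max_{t ∈ [0,1]} Q(t) ≤ Q(1), then d_F(P, Q) ≤ δ. -/

import Mathlib

/-- Continuous Fréchet distance between curves on the unit interval. -/
noncomputable def frechetDist {E : Type*} [PseudoMetricSpace E] (P Q : unitInterval → E) : ℝ :=
  sInf {r : ℝ | ∃ f g : unitInterval → unitInterval,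
    Continuous f ∧ Monotone f ∧ Function.Surjective f ∧
    Continuous g ∧ Monotone g ∧ Function.Surjective g ∧
    ∀ t, dist (P (f t)) (Q (g t)) ≤ r}

/-- The directed line segment from `a` to `b`, parametrized linearly. -/
noncomputable def segCurve {E : Type*} [AddCommGroup E] [Module ℝ E] (a b : E) :
    unitInterval → E :=
  fun t => (1 - (t : ℝ)) • a + (t : ℝ) • b

/-- The polygonal curve with `n+1` vertices `p 0, …, p n`, parametrized uniformly. -/
noncomputable def polyCurve {E : Type*} [AddCommGroup E] [Module ℝ E]
    (n : ℕ) (p : Fin (n + 1) → E) (t : unitInterval) : E :=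
  let x : ℝ := (t : ℝ) * n
  let i : ℕ := min (Nat.floor x) (n - 1)
  (1 - (x - (i : ℝ))) • p ⟨min i n, Nat.lt_succ_of_le (min_le_right i n)⟩ +
    (x - (i : ℝ)) • p ⟨min (i + 1) n, Nat.lt_succ_of_le (min_le_right (i + 1) n)⟩

/-- The subcurve `Q[a,b]`, linearly reparametrized over the unit interval. -/
noncomputable def subcurve {E : Type*} (Q : unitInterval → E) (a b : unitInterval) :
    unitInterval → E :=
  fun s => Q ⟨(1 - (s : ℝ)) * (a : ℝ) + (s : ℝ) * (b : ℝ), Set.mem_Icc.mpr ⟨by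
      have hs0 := unitInterval.nonneg s; have hs1 := unitInterval.le_one s
      have ha0 := unitInterval.nonneg a; have hb0 := unitInterval.nonneg b
      have h1 : (0:ℝ) ≤ (1 - (s:ℝ)) * (a:ℝ) := mul_nonneg (by linarith) ha0
      have h2 : (0:ℝ) ≤ (s:ℝ) * (b:ℝ) := mul_nonneg hs0 hb0
      linarith, by
      have hs0 := unitInterval.nonneg s; have hs1 := unitInterval.le_one s
      have ha1 := unitInterval.le_one a; have hb1 := unitInterval.le_one b
      have h1 : (1 - (s:ℝ)) * (a:ℝ) ≤ (1 - (s:ℝ)) * 1 :=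
        mul_le_mul_of_nonneg_left ha1 (by linarith)
      have h2 : (s:ℝ) * (b:ℝ) ≤ (s:ℝ) * 1 := mul_le_mul_of_nonneg_left hb1 hs0
      linarith⟩⟩

/-- The parameter (in the uniform parametrization) of the `i`-th vertex of a
polygonal curve with `n` edges. -/
noncomputable def vparam (n : ℕ) (i : Fin (n + 1)) : unitInterval :=
  ⟨((i : ℕ) : ℝ) / (n : ℝ), Set.mem_Icc.mpr ⟨by positivity, by
    have h1 : ((i : ℕ) : ℝ) ≤ (n : ℝ) := by exact_mod_cast Nat.lt_succ_iff.mp i.isLt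
    rcases Nat.eq_zero_or_pos n with h | h
    · subst h; simp
    · rw [div_le_one (by exact_mod_cast h)]; exact h1⟩⟩

/-- `P` is `c`-monotone increasing. -/
def ApproxInc (c : ℝ) (P : unitInterval → ℝ) : Prop :=
  ∀ s t : unitInterval, s ≤ t → P s - c ≤ P t

/-- `P` is `c`-monotone decreasing. -/
def ApproxDec (c : ℝ) (P : unitInterval → ℝ) : Prop :=
  ∀ s t : unitInterval, s ≤ t → P t ≤ P s + c

/-- `P` is `c`-monotone. -/
def ApproxMono (c : ℝ) (P : unitInterval → ℝ) : Prop :=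
  ApproxInc c P ∨ ApproxDec c P

/-- Concatenation of two curves (first on `[0,1/2]`, second on `[1/2,1]`). -/
noncomputable def concatC {E : Type*} (P Q : unitInterval → E) : unitInterval → E :=
  fun t =>
    if h : (t : ℝ) ≤ 1 / 2 then
      P ⟨2 * (t : ℝ), Set.mem_Icc.mpr ⟨by have := unitInterval.nonneg t; linarith,
        by linarith⟩⟩
    else
      Q ⟨2 * (t : ℝ) - 1, Set.mem_Icc.mpr ⟨by push_neg at h; linarith,
        by have := unitInterval.le_one t; linarith⟩⟩

/-- The data of a `δ`-straightening of the curve `Q`: parameters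
`0 = t 0 < … < t (Fin.last ℓ) = 1` such that each shortcut segment is within
Fréchet distance `δ` of the corresponding subcurve (locality), and each
corresponding subcurve stays in the closed interval spanned by the shortcut's
endpoints (edge-range-preserving). -/
def StraighteningData (δ : ℝ) (Q : unitInterval → ℝ) (ℓ : ℕ)
    (t : Fin (ℓ + 1) → unitInterval) : Prop :=
  StrictMono t ∧ t 0 = 0 ∧ t (Fin.last ℓ) = 1 ∧
    ∀ i : Fin ℓ,
      frechetDist (segCurve (Q (t i.castSucc)) (Q (t i.succ)))
          (subcurve Q (t i.castSucc) (t i.succ)) ≤ δ ∧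
      ∀ s : unitInterval, t i.castSucc ≤ s → s ≤ t i.succ →
        Q s ∈ Set.uIcc (Q (t i.castSucc)) (Q (t i.succ))

/-- `Q'` is a `δ`-straightening of `Q`. -/
def IsStraightening (δ : ℝ) (Q Q' : unitInterval → ℝ) : Prop :=
  ∃ (ℓ : ℕ) (t : Fin (ℓ + 1) → unitInterval),
    StraighteningData δ Q ℓ t ∧ Q' = polyCurve ℓ (fun i => Q (t i))

/-- The data of a `δ`-signature of the curve `Q`: parameters
`0 = t 0 < … < t (Fin.last ℓ) = 1` with the locality property, non-degenerate
vertex-range-preserving interior vertices, and the `δ`-edge-length property. -/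
def SignatureData (δ : ℝ) (Q : unitInterval → ℝ) (ℓ : ℕ)
    (t : Fin (ℓ + 1) → unitInterval) : Prop :=
  StrictMono t ∧ t 0 = 0 ∧ t (Fin.last ℓ) = 1 ∧
    (∀ i : Fin ℓ,
      frechetDist (segCurve (Q (t i.castSucc)) (Q (t i.succ)))
          (subcurve Q (t i.castSucc) (t i.succ)) ≤ δ) ∧
    (∀ i : ℕ, ∀ _h1 : 0 < i, ∀ _h2 : i < ℓ,
      (Q (t ⟨i - 1, by omega⟩) < Q (t ⟨i, by omega⟩) ∧
        Q (t ⟨i + 1, by omega⟩) < Q (t ⟨i, by omega⟩) ∧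
        ∀ s : unitInterval, t ⟨i - 1, by omega⟩ ≤ s → s ≤ t ⟨i + 1, by omega⟩ →
          Q s ≤ Q (t ⟨i, by omega⟩)) ∨
      (Q (t ⟨i, by omega⟩) < Q (t ⟨i - 1, by omega⟩) ∧
        Q (t ⟨i, by omega⟩) < Q (t ⟨i + 1, by omega⟩) ∧
        ∀ s : unitInterval, t ⟨i - 1, by omega⟩ ≤ s → s ≤ t ⟨i + 1, by omega⟩ →
          Q (t ⟨i, by omega⟩) ≤ Q s)) ∧
    (∀ _h : 1 ≤ ℓ,
      δ < |Q (t ⟨1, by omega⟩) - Q (t 0)| ∧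
      δ < |Q (t (Fin.last ℓ)) - Q (t ⟨ℓ - 1, by omega⟩)|) ∧
    (∀ j : ℕ, ∀ _hj1 : 1 ≤ j, ∀ _hj2 : j + 2 ≤ ℓ,
      2 * δ < |Q (t ⟨j + 1, by omega⟩) - Q (t ⟨j, by omega⟩)|)

/-- `Q'` is a `δ`-signature of `Q`. -/
def IsSignature (δ : ℝ) (Q Q' : unitInterval → ℝ) : Prop :=
  ∃ (ℓ : ℕ) (t : Fin (ℓ + 1) → unitInterval),
    SignatureData δ Q ℓ t ∧ Q' = polyCurve ℓ (fun i => Q (t i))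

/-- Vertex `j` of the polygonal curve on `q` `δ`-visits vertex `a` of the
polygonal curve on `p` under the monotone traversal `(f, g)`: they are within
distance `δ`, and the traversal matches one of them to the other vertex or to the
interior of an edge incident to it. -/
def Visits (δ : ℝ) (m k : ℕ) (p : Fin (m + 1) → ℝ) (q : Fin (k + 1) → ℝ)
    (f g : unitInterval → unitInterval) (j : Fin (k + 1)) (a : Fin (m + 1)) : Prop :=
  |q j - p a| ≤ δ ∧
    ((∃ t : unitInterval, g t = vparam k j ∧ |(f t : ℝ) * (m : ℝ) - ((a : ℕ) : ℝ)| < 1) ∨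
     (∃ t : unitInterval, f t = vparam m a ∧ |(g t : ℝ) * (k : ℝ) - ((j : ℕ) : ℝ)| < 1))

/-!
In `ℝ`, a bound `d_F(P, X) ≤ δ` against the increasing segment `X` from `a` to `b` makes `P`
`2δ`-approximately increasing, with values in `[a - δ, b + δ]` and `P 1 ≥ b - δ`; likewise for
`Q` and `δ'`. The running maximum `M` of `Q` increases from `a` to `b`, and `M - 2δ' ≤ Q ≤ M`.
Match the parameter `u` of `Q` with the last time at which `P ≤ M u - δ`. This matching is
monotone, and along the traversal obtained by filling in its jumps, `P` stays within `δ` of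
`M u`. Where `Q u < M u`, `M` is locally constant, so the partner of `u` is exactly that last
time, at which `P ≤ M u - δ ≤ Q u + δ`, or it is the start, where `|Q 0 - P 0| ≤ δ''` and
`Q u ≥ a - δ'` give the bound.
-/

open Set unitInterval

def IsReparam (f : I → I) : Prop :=
  Continuous f ∧ Monotone f ∧ Function.Surjective f

namespace IsReparam

variable {f : I → I}

lemma map_one (hf : IsReparam f) : f 1 = 1 := by
  obtain ⟨t, ht⟩ := hf.2.2 1
  exact le_antisymm le_one' (ht.symm.trans_le (hf.2.1 (le_one' : t ≤ 1)))

lemma of_map_zero_one (hc : Continuous f) (hm : Monotone f) (h0 : f 0 = 0) (h1 : f 1 = 1) :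
    IsReparam f :=
  ⟨hc, hm, fun s =>
    intermediate_value_univ 0 1 hc (by rw [h0, h1]; exact ⟨nonneg', le_one'⟩)⟩

lemma exists_le_of_le (hf : IsReparam f) {s s' : I} (hs : s ≤ s') :
    ∃ τ τ', τ ≤ τ' ∧ f τ = s ∧ f τ' = s' := by
  obtain ⟨τ, rfl⟩ := hf.2.2 s
  obtain ⟨τ', rfl⟩ := hf.2.2 s'
  rcases le_total τ τ' with h | h
  · exact ⟨τ, τ', h, rfl, rfl⟩
  · exact ⟨τ, τ, le_rfl, rfl, le_antisymm hs (hf.2.1 h)⟩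

end IsReparam

section Frechet

variable {E : Type*} [PseudoMetricSpace E] {P Q : I → E}

lemma frechetDist_le_of_reparam {f g : I → I} {r : ℝ} (hf : IsReparam f) (hg : IsReparam g)
    (h : ∀ t, dist (P (f t)) (Q (g t)) ≤ r) : frechetDist P Q ≤ r :=
  csInf_le ⟨0, fun _ ⟨_, _, _, _, _, _, _, _, hb⟩ => dist_nonneg.trans (hb 0)⟩
    ⟨f, g, hf.1, hf.2.1, hf.2.2, hg.1, hg.2.1, hg.2.2, h⟩

lemma exists_reparam_of_frechetDist_lt (hP : Continuous P) (hQ : Continuous Q) {r : ℝ}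
    (h : frechetDist P Q < r) :
    ∃ f g, IsReparam f ∧ IsReparam g ∧ ∀ t, dist (P (f t)) (Q (g t)) ≤ r := by
  obtain ⟨C, hC⟩ := (isCompact_range (hP.dist hQ)).bddAbove
  refine (exists_lt_of_csInf_lt ?_ h).elim
    fun r' ⟨⟨f, g, hfc, hfm, hfs, hgc, hgm, hgs, hb⟩, hr'⟩ =>
      ⟨f, g, ⟨hfc, hfm, hfs⟩, ⟨hgc, hgm, hgs⟩, fun t => (hb t).trans hr'.le⟩
  exact ⟨C, id, id, continuous_id, monotone_id, Function.surjective_id, continuous_id,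
    monotone_id, Function.surjective_id, fun t => hC ⟨t, rfl⟩⟩

lemma dist_apply_one_le_of_frechetDist_le (hP : Continuous P) (hQ : Continuous Q) {δ : ℝ}
    (h : frechetDist P Q ≤ δ) : dist (P 1) (Q 1) ≤ δ :=
  le_of_forall_pos_le_add fun ε hε => by
    obtain ⟨f, g, hf, hg, hfg⟩ :=
      exists_reparam_of_frechetDist_lt hP hQ (lt_add_of_le_of_pos h hε)
    simpa only [hf.map_one, hg.map_one] using hfg 1

end Frechet

section MonotoneReference

variable {P X : I → ℝ} {δ : ℝ}

lemma approxInc_of_frechetDist_le (hP : Continuous P) (hX : Continuous X) (hXm : Monotone X)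
    (h : frechetDist P X ≤ δ) : ApproxInc (2 * δ) P := by
  intro s s' hs
  refine le_of_forall_pos_le_add fun ε hε => ?_
  obtain ⟨f, g, hf, hg, hfg⟩ :=
    exists_reparam_of_frechetDist_lt hP hX (show frechetDist P X < δ + ε / 2 by linarith)
  obtain ⟨τ, τ', hτ, rfl, rfl⟩ := hf.exists_le_of_le hs
  simp only [Real.dist_eq, abs_le] at hfg
  linarith [hfg τ, hfg τ', hXm (hg.2.1 hτ)]

lemma mem_Icc_of_frechetDist_le (hP : Continuous P) (hX : Continuous X) (hXm : Monotone X)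
    (h : frechetDist P X ≤ δ) (s : I) : P s ∈ Icc (X 0 - δ) (X 1 + δ) := by
  have hclose : ∀ ε > 0, X 0 - δ ≤ P s + ε ∧ P s ≤ X 1 + δ + ε := fun ε hε => by
    obtain ⟨f, g, hf, -, hfg⟩ :=
      exists_reparam_of_frechetDist_lt hP hX (lt_add_of_le_of_pos h hε)
    obtain ⟨τ, rfl⟩ := hf.2.2 s
    simp only [Real.dist_eq, abs_le] at hfg
    constructor <;> linarith [hfg τ, hXm (nonneg' : 0 ≤ g τ), hXm (le_one' : g τ ≤ 1)]
  exact ⟨le_of_forall_pos_le_add fun ε hε => (hclose ε hε).1,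
    le_of_forall_pos_le_add fun ε hε => (hclose ε hε).2⟩

end MonotoneReference

lemma segCurve_apply (a b : ℝ) (t : I) : segCurve a b t = a + t * (b - a) := by
  simp only [segCurve, smul_eq_mul]; ring

lemma continuous_segCurve (a b : ℝ) : Continuous (segCurve a b) := by
  unfold segCurve; fun_prop

lemma monotone_segCurve {a b : ℝ} (hab : a ≤ b) : Monotone (segCurve a b) := fun s t hst => by
  have : (s : ℝ) ≤ t := hst
  simp only [segCurve_apply]
  nlinarith

@[simp] lemma segCurve_zero (a b : ℝ) : segCurve a b 0 = a := by simp [segCurve_apply]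

@[simp] lemma segCurve_one (a b : ℝ) : segCurve a b 1 = b := by simp [segCurve_apply]

section RunMax

variable {Q : I → ℝ}

noncomputable def runMax (Q : I → ℝ) (u : I) : ℝ := sSup (Q '' Iic u)

lemma le_runMax (hQ : Continuous Q) {u v : I} (h : v ≤ u) : Q v ≤ runMax Q u :=
  le_csSup (isClosed_Iic.isCompact.image hQ).bddAbove ⟨v, h, rfl⟩

lemma runMax_le {u : I} {c : ℝ} (h : ∀ v ≤ u, Q v ≤ c) : runMax Q u ≤ c :=
  csSup_le ⟨Q u, u, self_mem_Iic, rfl⟩ (forall_mem_image.2 h)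

lemma exists_le_apply_eq_runMax (hQ : Continuous Q) (u : I) : ∃ z ≤ u, Q z = runMax Q u :=
  (isClosed_Iic.isCompact.image hQ).sSup_mem ⟨Q u, u, self_mem_Iic, rfl⟩

lemma runMax_mono (hQ : Continuous Q) : Monotone (runMax Q) := fun _ _ h =>
  runMax_le fun _ hv => le_runMax hQ (hv.trans h)

lemma runMax_zero (hQ : Continuous Q) : runMax Q 0 = Q 0 :=
  le_antisymm (runMax_le fun v hv => by rw [le_antisymm hv nonneg']) (le_runMax hQ le_rfl)

lemma runMax_one (hQ : Continuous Q) (hmax : ∀ u, Q u ≤ Q 1) : runMax Q 1 = Q 1 :=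
  le_antisymm (runMax_le fun v _ => hmax v) (le_runMax hQ le_rfl)

lemma ApproxInc.runMax_sub_le {c : ℝ} (hQ : Continuous Q) (hinc : ApproxInc c Q) (u : I) :
    runMax Q u - c ≤ Q u := by
  obtain ⟨z, hz, hzu⟩ := exists_le_apply_eq_runMax hQ u
  exact hzu ▸ hinc z u hz

lemma exists_lt_lt_runMax (hQ : Continuous Q) {u : I} (hu : 0 < u) {c : ℝ}
    (hc : c < runMax Q u) : ∃ u' < u, c < runMax Q u' := by
  obtain ⟨z, hzu, hz⟩ := exists_le_apply_eq_runMax hQ u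
  rcases hzu.lt_or_eq with hzu | rfl
  · exact ⟨z, hzu, hc.trans_le (hz ▸ le_runMax hQ le_rfl)⟩
  · obtain ⟨l, hl, hlu⟩ := exists_Ioc_subset_of_mem_nhds
      ((isOpen_Ioi.preimage hQ).mem_nhds (hz ▸ hc : c < Q z)) ⟨0, hu⟩
    obtain ⟨u', hlu', hu'⟩ := exists_between hl
    exact ⟨u', hu', (hlu ⟨hlu', hu'.le⟩ : c < Q u').trans_le (le_runMax hQ le_rfl)⟩

lemma exists_gt_runMax_le (hQ : Continuous Q) {u : I} (hu : u < 1) {c : ℝ} (hc : Q u < c) :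
    ∃ u'' > u, runMax Q u'' ≤ max (runMax Q u) c := by
  obtain ⟨l, hl, hlu⟩ := exists_Ico_subset_of_mem_nhds
    ((isOpen_Iio.preimage hQ).mem_nhds hc) ⟨1, hu⟩
  obtain ⟨u'', hu'', hu''l⟩ := exists_between hl
  refine ⟨u'', hu'', runMax_le fun v hv => ?_⟩
  rcases le_or_gt v u with hvu | hvu
  · exact (le_runMax hQ hvu).trans (le_max_left _ _)
  · exact (hlu ⟨hvu.le, hv.trans_lt hu''l⟩ : Q v < c).le.trans (le_max_right _ _)

end RunMax

section LastTime

variable {P : I → ℝ} {r : ℝ}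

noncomputable def lastTimeLE (P : I → ℝ) (r : ℝ) : I := sSup {s | P s ≤ r}

lemma lastTimeLE_mono : Monotone (lastTimeLE P) := fun _ _ h =>
  sSup_le_sSup fun _ hs => (show _ ≤ _ from hs).trans h

lemma lt_apply_of_lastTimeLE_lt {v : I} (hv : lastTimeLE P r < v) : r < P v :=
  lt_of_not_ge fun h => hv.not_ge (le_sSup h)

lemma apply_lastTimeLE_le_or_eq_zero (hP : Continuous P) :
    P (lastTimeLE P r) ≤ r ∨ lastTimeLE P r = 0 := by
  rcases eq_empty_or_nonempty {s | P s ≤ r} with h | h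
  · exact Or.inr (by simp only [lastTimeLE, h, sSup_empty]; rfl)
  · exact Or.inl ((isClosed_le hP continuous_const).sSup_mem h)

lemma le_apply_lastTimeLE (hP : Continuous P) (h1 : r ≤ P 1) : r ≤ P (lastTimeLE P r) := by
  by_contra! hlt
  have hσ : lastTimeLE P r < 1 := lt_of_le_of_ne le_one' fun h => by rw [h] at hlt; linarith
  obtain ⟨l, hl, hσl⟩ :=
    exists_Ico_subset_of_mem_nhds ((isOpen_Iio.preimage hP).mem_nhds hlt) ⟨1, hσ⟩
  obtain ⟨v, hσv, hvl⟩ := exists_between hl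
  exact (lt_apply_of_lastTimeLE_lt hσv).not_gt (hσl ⟨hσv.le, hvl⟩)

lemma le_apply_of_lastTimeLE_le (hP : Continuous P) (h1 : r ≤ P 1) {v : I}
    (hv : lastTimeLE P r ≤ v) : r ≤ P v := by
  rcases hv.lt_or_eq with hv | rfl
  · exact (lt_apply_of_lastTimeLE_lt hv).le
  · exact le_apply_lastTimeLE hP h1

lemma ApproxInc.apply_le_of_le_lastTimeLE {c : ℝ} (hP : Continuous P) (hinc : ApproxInc c P)
    (h0 : P 0 ≤ r + c) {v : I} (hv : v ≤ lastTimeLE P r) : P v ≤ r + c := by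
  rcases apply_lastTimeLE_le_or_eq_zero hP (r := r) with h | h
  · linarith [hinc v _ hv]
  · rwa [le_antisymm (hv.trans_eq h) nonneg']

end LastTime

section Fill

variable {h : I → I}

/-- Fill the jumps of the graph `s = h u` with vertical segments and parametrize the resulting
monotone path by `c = u + s ∈ [0, 2]`: `fillParam h c` is its `u`-coordinate and
`c - fillParam h c` its `s`-coordinate. -/
noncomputable def fillParam (h : I → I) (c : ℝ) : I := sSup {u : I | (u : ℝ) + h u ≤ c}

lemma fillParam_mono : Monotone (fillParam h) := fun _ _ hc =>
  sSup_le_sSup fun _ hu => (show _ ≤ _ from hu).trans hc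

lemma apply_le_sub_fillParam (hh : Monotone h) {c : ℝ} {u : I} (hu : u < fillParam h c) :
    (h u : ℝ) ≤ c - fillParam h c := by
  by_contra! hlt
  obtain ⟨x, hx, hxV⟩ :=
    exists_between (max_lt (show (u : ℝ) < fillParam h c from hu) (by linarith : c - h u < _))
  have hux : (u : ℝ) < x := (le_max_left _ _).trans_lt hx
  have hxI : x ∈ I := ⟨(nonneg u).trans hux.le, hxV.le.trans (le_one _)⟩
  obtain ⟨w, hw, hxw⟩ := lt_sSup_iff.1 (show (⟨x, hxI⟩ : I) < fillParam h c from hxV)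
  have hw : (w : ℝ) + h w ≤ c := hw
  have hxw : x < w := hxw
  have huw : (h u : ℝ) ≤ h w := hh (Subtype.coe_le_coe.1 (hux.trans hxw).le)
  linarith [le_max_right (u : ℝ) (c - h u)]

lemma sub_fillParam_le_apply (hh : Monotone h) {c : ℝ} {u : I} (hu : fillParam h c < u) :
    c - fillParam h c ≤ h u := by
  by_contra! hlt
  obtain ⟨x, hVx, hx⟩ :=
    exists_between (lt_min (show (fillParam h c : ℝ) < u from hu) (by linarith : _ < c - h u))
  have hxu : x ≤ u := (hx.trans_le (min_le_left _ _)).le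
  have hxI : x ∈ I := ⟨(nonneg _).trans hVx.le, hxu.trans (le_one u)⟩
  have hcx : c < x + h ⟨x, hxI⟩ := lt_of_not_ge fun hle =>
    (show fillParam h c < ⟨x, hxI⟩ from hVx).not_ge (le_sSup hle)
  have hxu' : (h ⟨x, hxI⟩ : ℝ) ≤ h u := hh (Subtype.coe_le_coe.1 hxu)
  linarith [min_le_right (u : ℝ) (c - h u)]

lemma sub_fillParam_mono (hh : Monotone h) : Monotone fun c => c - (fillParam h c : ℝ) := by
  intro c c' hc
  rcases le_or_gt (fillParam h c') (fillParam h c) with hle | hlt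
  · have : (fillParam h c' : ℝ) ≤ fillParam h c := hle
    dsimp only; linarith
  · obtain ⟨w, hw, hw'⟩ := exists_between hlt
    linarith [sub_fillParam_le_apply hh hw, apply_le_sub_fillParam hh hw']

lemma continuous_fillParam (hh : Monotone h) : Continuous (fillParam h) := by
  have : LipschitzWith 1 fun c => (fillParam h c : ℝ) := LipschitzWith.of_le_add fun c c' => by
    rw [Real.dist_eq]
    rcases le_total c c' with hc | hc
    · have : (fillParam h c : ℝ) ≤ fillParam h c' := fillParam_mono hc
      linarith [abs_nonneg (c - c')]
    · have := sub_fillParam_mono hh hc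
      dsimp only at this
      linarith [le_abs_self (c - c')]
  exact continuous_induced_rng.2 this.continuous

lemma fillParam_zero : fillParam h 0 = 0 :=
  le_antisymm (sSup_le fun u (hu : (u : ℝ) + h u ≤ 0) =>
    show (u : ℝ) ≤ 0 by linarith [nonneg (h u)]) nonneg'

lemma fillParam_two : fillParam h 2 = 1 :=
  le_antisymm le_one' (le_sSup (show ((1 : I) : ℝ) + h 1 ≤ 2 by
    push_cast; linarith [le_one (h 1)]))

theorem Monotone.exists_reparam_fillGraph (hh : Monotone h) :
    ∃ F G : I → I, IsReparam F ∧ IsReparam G ∧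
      ∀ t, (∀ u < G t, h u ≤ F t) ∧ (∀ u, G t < u → F t ≤ h u) := by
  have hc : Continuous fun t : I => 2 * (t : ℝ) := by fun_prop
  have hm : Monotone fun t : I => 2 * (t : ℝ) := fun _ _ hst =>
    mul_le_mul_of_nonneg_left (Subtype.coe_le_coe.2 hst) zero_le_two
  refine ⟨fun t => projIcc 0 1 zero_le_one (2 * t - fillParam h (2 * t)),
    fun t => fillParam h (2 * t), IsReparam.of_map_zero_one ?_ ?_ ?_ ?_,
    IsReparam.of_map_zero_one ((continuous_fillParam hh).comp hc) (fillParam_mono.comp hm) ?_ ?_,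
    fun t => ⟨fun u hu => ?_, fun u hu => ?_⟩⟩
  · exact continuous_projIcc.comp (hc.sub (continuous_subtype_val.comp
      ((continuous_fillParam hh).comp hc)))
  · exact (monotone_projIcc _).comp ((sub_fillParam_mono hh).comp hm)
  · simp [fillParam_zero]
  · norm_num [fillParam_two]
  · simp [fillParam_zero]
  · simp [fillParam_two]
  · rw [← projIcc_val zero_le_one (h u)]
    exact monotone_projIcc _ (apply_le_sub_fillParam hh hu)
  · rw [← projIcc_val zero_le_one (h u)]
    exact monotone_projIcc _ (sub_fillParam_le_apply hh hu)

end Fill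

section LevelMatch

variable {P Q : I → ℝ} {δ : ℝ}

noncomputable def levelMatch (P Q : I → ℝ) (δ : ℝ) (u : I) : I :=
  lastTimeLE P (runMax Q u - δ)

lemma levelMatch_mono (hQ : Continuous Q) : Monotone (levelMatch P Q δ) :=
  lastTimeLE_mono.comp fun _ _ h => sub_le_sub_right (runMax_mono hQ h) δ

variable {s u : I}

lemma runMax_sub_le_of_levelMatch_le (hP : Continuous P) (hQ : Continuous Q)
    (hmax : ∀ u, Q u ≤ Q 1) (hlo : ∀ s, Q 0 - δ ≤ P s) (h1 : Q 1 - δ ≤ P 1)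
    (hleft : ∀ u' < u, levelMatch P Q δ u' ≤ s) : runMax Q u - δ ≤ P s := by
  rcases (nonneg' : 0 ≤ u).lt_or_eq with hu | rfl
  · by_contra! hlt
    obtain ⟨u', hu', hlt'⟩ := exists_lt_lt_runMax hQ hu (show P s + δ < runMax Q u by linarith)
    have hM1 : runMax Q u' ≤ Q 1 := runMax_le fun v _ => hmax v
    linarith [le_apply_of_lastTimeLE_le hP (by linarith) (hleft u' hu')]
  · rw [runMax_zero hQ]
    exact hlo s

lemma le_runMax_add_of_le_levelMatch (hP : Continuous P) (hQ : Continuous Q)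
    (hinc : ApproxInc (2 * δ) P) (hmax : ∀ u, Q u ≤ Q 1) (hhi : ∀ s, P s ≤ Q 1 + δ)
    (h0 : P 0 ≤ Q 0 + δ) (hright : ∀ u'', u < u'' → s ≤ levelMatch P Q δ u'') :
    P s ≤ runMax Q u + δ := by
  rcases (le_one' : u ≤ 1).lt_or_eq with hu | rfl
  · by_contra! hlt
    obtain ⟨u'', hu'', hM⟩ := exists_gt_runMax_le hQ hu (c := (runMax Q u + P s - δ) / 2)
      (by linarith [le_runMax hQ (le_refl u)])
    have hM' : runMax Q u'' < P s - δ := hM.trans_lt (max_lt (by linarith) (by linarith))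
    have hM0 : Q 0 ≤ runMax Q u'' := le_runMax hQ nonneg'
    linarith [hinc.apply_le_of_le_lastTimeLE hP (by linarith) (hright u'' hu'')]
  · rw [runMax_one hQ hmax]
    exact hhi s

lemma eq_levelMatch_of_apply_lt_runMax (hQ : Continuous Q) (hmax : ∀ u, Q u ≤ Q 1)
    (hleft : ∀ u' < u, levelMatch P Q δ u' ≤ s)
    (hright : ∀ u'', u < u'' → s ≤ levelMatch P Q δ u'') (hdip : Q u < runMax Q u) :
    s = levelMatch P Q δ u := by
  obtain ⟨z, hzu, hz⟩ := exists_le_apply_eq_runMax hQ u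
  have hzu : z < u := hzu.lt_of_ne (by rintro rfl; exact hdip.ne hz)
  have hu : u < 1 := lt_of_le_of_ne le_one' (by
    rintro rfl; exact hdip.not_ge (runMax_le fun v _ => hmax v))
  obtain ⟨u'', hu'', hM⟩ := exists_gt_runMax_le hQ hu hdip
  rw [max_self] at hM
  have hMz : runMax Q z = runMax Q u :=
    le_antisymm (runMax_mono hQ hzu.le) (hz ▸ le_runMax hQ le_rfl)
  have hMu'' : runMax Q u'' = runMax Q u := le_antisymm hM (runMax_mono hQ hu''.le)
  refine le_antisymm ?_ ?_
  · calc s ≤ levelMatch P Q δ u'' := hright u'' hu''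
      _ = levelMatch P Q δ u := by simp only [levelMatch, hMu'']
  · calc levelMatch P Q δ u = levelMatch P Q δ z := by simp only [levelMatch, hMz]
      _ ≤ s := hleft z hzu

theorem frechetDist_le_of_approxInc {δ' δ'' : ℝ} (hP : Continuous P) (hQ : Continuous Q)
    (hPinc : ApproxInc (2 * δ) P) (hQinc : ApproxInc (2 * δ') Q)
    (hPlo : ∀ s, Q 0 - δ ≤ P s) (hPhi : ∀ s, P s ≤ Q 1 + δ) (hP1 : Q 1 - δ ≤ P 1)
    (hP0 : P 0 ≤ Q 0 + δ'') (hQlo : ∀ u, Q 0 - δ' ≤ Q u) (hmax : ∀ u, Q u ≤ Q 1)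
    (hδ' : 0 ≤ δ') (hδ'' : 0 ≤ δ'') (hsum : δ = δ' + δ'') : frechetDist P Q ≤ δ := by
  obtain ⟨F, G, hF, hG, hFG⟩ :=
    (levelMatch_mono (P := P) (δ := δ) hQ).exists_reparam_fillGraph
  refine frechetDist_le_of_reparam hF hG fun t => ?_
  obtain ⟨hleft, hright⟩ := hFG t
  have hlo := runMax_sub_le_of_levelMatch_le hP hQ hmax hPlo hP1 hleft
  have hhi := le_runMax_add_of_le_levelMatch hP hQ hPinc hmax hPhi (by linarith) hright
  rw [Real.dist_eq, abs_le]
  rcases (le_runMax hQ (le_refl (G t))).lt_or_eq with hdip | heq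
  · have hQM := hQinc.runMax_sub_le hQ (G t)
    rw [eq_levelMatch_of_apply_lt_runMax hQ hmax hleft hright hdip, levelMatch] at hlo ⊢
    rcases apply_lastTimeLE_le_or_eq_zero hP (r := runMax Q (G t) - δ) with h | h
    · constructor <;> linarith
    · rw [h] at hlo ⊢
      constructor <;> linarith [hQlo (G t)]
  · constructor <;> linarith

end LevelMatch

/-- Segment-proxy lemma for signature edges, case (ii):
start points within `δ''` and `Q` attains its maximum at the endpoint. -/
theorem frechetDist_le_signatureEdge_maxAtEnd (δ δ' δ'' : ℝ)
    (hδ' : 0 ≤ δ') (hδ'' : 0 ≤ δ'') (hsum : δ = δ' + δ'')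
    (a b : ℝ) (hab : a ≤ b)
    (Q : unitInterval → ℝ) (hQc : Continuous Q) (hQ0 : Q 0 = a) (hQ1 : Q 1 = b)
    (hQX : frechetDist Q (segCurve a b) ≤ δ')
    (P : unitInterval → ℝ) (hPc : Continuous P)
    (hPX : frechetDist P (segCurve a b) ≤ δ)
    (h0 : |Q 0 - P 0| ≤ δ'') (hmax : ∀ t : unitInterval, Q t ≤ Q 1) :
    frechetDist P Q ≤ δ := by
  subst hQ0 hQ1
  have hX := continuous_segCurve (Q 0) (Q 1)
  have hXm := monotone_segCurve hab
  have hPX' := mem_Icc_of_frechetDist_le hPc hX hXm hPX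
  have hQX' := mem_Icc_of_frechetDist_le hQc hX hXm hQX
  have hP1 := abs_le.1 ((Real.dist_eq _ _).symm.trans_le
    (dist_apply_one_le_of_frechetDist_le hPc hX hPX))
  simp only [segCurve_zero, segCurve_one] at hPX' hQX' hP1
  exact frechetDist_le_of_approxInc hPc hQc (approxInc_of_frechetDist_le hPc hX hXm hPX)
    (approxInc_of_frechetDist_le hQc hX hXm hQX) (fun s => (hPX' s).1) (fun s => (hPX' s).2)
    (by linarith) (by linarith [abs_le.1 h0]) (fun u => (hQX' u).1) hmax hδ' hδ'' hsum
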